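/- Let f(t) = ∑_{n∈ℤ} a_n t^n be a Laurent polynomial with real coefficients which is positive, i.e., f(z) is a nonnegative real number for every z ∈ ℂ with |z| = 1. Let m ≥ 1 be an integer such that a_n = 0 for every integer n > m divisible by m. If a_m = a_0/2, then f is divisible by t^{-m} + 2 + t^m in the ring ℝ[t, t^{-1}]; if a_m = −a_0/2, then f is divisible by −t^{-m} + 2 − t^m in ℝ[t, t^{-1}]. -/

import Mathlib

/-!
Positivity on the unit circle makes `f` real there, so `a₋ₙ = aₙ`. Put `c = -1` in case (ii)
and `c = 1` in case (iii), and let `wᵐ = c`. Averaging `f` over the points `ζᵏ w`, `ζ` a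
primitive `m`-th root of unity, keeps only the terms `a_{km} w^{km}`; by the symmetry and the
vanishing hypothesis these are the ones with `k = -1, 0, 1`, so the average is
`m (a₀ + 2c aₘ) = 0`. As every value is nonnegative, `f(w) = 0`. A zero of a function that is
nonnegative on the circle is a critical point, so each root of `tᵐ - c` is a double root of `f`,
and `(tᵐ - c)²`, which is the claimed divisor up to the unit `±tᵐ`, divides `f`.
-/

open LaurentPolynomial ComplexOrder

/-- The value of a real Laurent polynomial `f = ∑ aₙ tⁿ` at a complex number `z ≠ 0`. -/
noncomputable def evalCircle (f : LaurentPolynomial ℝ) (z : ℂ) : ℂ :=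
  Finsupp.sum (AddMonoidAlgebra.coeff f) fun n c => (c : ℂ) * z ^ n

/-- The coefficient `aₙ` of a real Laurent polynomial `f = ∑ aₙ tⁿ`. -/
def coeffL (f : LaurentPolynomial ℝ) (n : ℤ) : ℝ := (AddMonoidAlgebra.coeff f : ℤ →₀ ℝ) n

open scoped Polynomial ComplexConjugate
open Finset Filter Topology

lemma infinite_setOf_norm_eq_one : {z : ℂ | ‖z‖ = 1}.Infinite := by
  have hinj := injOn_circleMap_of_abs_sub_le' (c := 0) one_ne_zero (a := 0) (b := 2 * Real.pi)
    (by simp)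
  refine ((Set.Ico_infinite Real.two_pi_pos).image hinj).mono ?_
  rintro _ ⟨θ, -, rfl⟩
  simp

lemma evalCircle_eq_eval₂ (f : LaurentPolynomial ℝ) (z : ℂˣ) :
    evalCircle f z = eval₂ Complex.ofRealHom z f := by
  induction f using LaurentPolynomial.induction_on' with
  | add p q hp hq =>
    rw [map_add, ← hp, ← hq, evalCircle, AddMonoidAlgebra.coeff_add]
    exact Finsupp.sum_add_index' (by simp) (by simp [add_mul])
  | C_mul_T n a =>
    rw [eval₂_C_mul_T, ← single_eq_C_mul_T, evalCircle, AddMonoidAlgebra.coeff_single,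
      Finsupp.sum_single_index (by simp)]
    simp

lemma evalCircle_sub (f g : LaurentPolynomial ℝ) (z : ℂ) :
    evalCircle (f - g) z = evalCircle f z - evalCircle g z := by
  rw [evalCircle, AddMonoidAlgebra.coeff_sub]
  exact Finsupp.sum_sub_index (by simp [sub_mul])

lemma conj_evalCircle (f : LaurentPolynomial ℝ) (z : ℂ) :
    conj (evalCircle f z) = evalCircle f (conj z) := by
  rw [evalCircle, evalCircle, map_finsuppSum]
  simp only [map_mul, map_zpow₀, Complex.conj_ofReal]

lemma evalCircle_invert (f : LaurentPolynomial ℝ) (z : ℂ) :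
    evalCircle (invert f) z = evalCircle f z⁻¹ := by
  have : AddMonoidAlgebra.coeff (invert f) =
      Finsupp.equivMapDomain (Equiv.neg ℤ) (AddMonoidAlgebra.coeff f) := by
    ext n; simp [invert_apply]
  rw [evalCircle, this, Finsupp.sum_equivMapDomain, evalCircle]
  simp [zpow_neg]

lemma eval_map_ofReal_eq_evalCircle_mul_pow {f : LaurentPolynomial ℝ} {N : ℕ} {p : ℝ[X]}
    (hp : p.toLaurent = f * T N) {z : ℂ} (hz : z ≠ 0) :
    (p.map Complex.ofRealHom).eval z = evalCircle f z * z ^ N := by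
  have := congrArg (eval₂ Complex.ofRealHom (Units.mk0 z hz)) hp
  rw [eval₂_toLaurent, map_mul, eval₂_T, ← evalCircle_eq_eval₂] at this
  simpa [Polynomial.eval_map] using this

lemma eq_zero_of_forall_evalCircle_eq_zero {f : LaurentPolynomial ℝ}
    (h : ∀ z : ℂ, ‖z‖ = 1 → evalCircle f z = 0) : f = 0 := by
  obtain ⟨N, p, hp⟩ := f.exists_T_pow
  have hmap : p.map Complex.ofRealHom = 0 := by
    refine Polynomial.eq_zero_of_infinite_isRoot _ (infinite_setOf_norm_eq_one.mono fun z hz => ?_)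
    have hz0 : z ≠ 0 := by rintro rfl; simp at hz
    simp [Polynomial.IsRoot, eval_map_ofReal_eq_evalCircle_mul_pow hp hz0, h z hz]
  rw [Polynomial.map_eq_zero_iff Complex.ofReal_injective] at hmap
  rwa [hmap, map_zero, eq_comm, (isUnit_T _).mul_left_eq_zero] at hp

lemma invert_eq_self_of_forall_im_evalCircle_eq_zero {f : LaurentPolynomial ℝ}
    (h : ∀ z : ℂ, ‖z‖ = 1 → (evalCircle f z).im = 0) : invert f = f := by
  rw [← sub_eq_zero]
  refine eq_zero_of_forall_evalCircle_eq_zero fun z hz => ?_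
  rw [evalCircle_sub, evalCircle_invert, Complex.inv_eq_conj hz, ← conj_evalCircle,
    Complex.conj_eq_iff_im.2 (h z hz), sub_self]

lemma coeffL_neg_of_nonneg {f : LaurentPolynomial ℝ}
    (hpos : ∀ z : ℂ, ‖z‖ = 1 → 0 ≤ evalCircle f z) (n : ℤ) : coeffL f (-n) = coeffL f n := by
  have hinv := invert_eq_self_of_forall_im_evalCircle_eq_zero fun z hz =>
    ((Complex.le_def.1 (hpos z hz)).2).symm
  rw [coeffL, coeffL, ← invert_apply, hinv]

lemma HasDerivAt.eq_zero_of_eventually_nonneg_of_eq_zero {ψ : ℝ → ℂ} {D : ℂ} {θ₀ : ℝ}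
    (hψ : HasDerivAt ψ D θ₀) (hnonneg : ∀ᶠ θ in 𝓝 θ₀, 0 ≤ ψ θ) (h0 : ψ θ₀ = 0) : D = 0 := by
  have hmin : IsLocalMin (fun θ => (ψ θ).re) θ₀ :=
    hnonneg.mono fun θ hθ => by simpa [h0] using (Complex.le_def.1 hθ).1
  have him : (fun θ => (ψ θ).im) =ᶠ[𝓝 θ₀] fun _ => 0 :=
    hnonneg.mono fun θ hθ => ((Complex.le_def.1 hθ).2).symm
  apply Complex.ext
  · exact hmin.hasDerivAt_eq_zero (Complex.reCLM.hasFDerivAt.comp_hasDerivAt θ₀ hψ)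
  · exact (Complex.imCLM.hasFDerivAt.comp_hasDerivAt θ₀ hψ).unique
      ((hasDerivAt_const θ₀ 0).congr_of_eventuallyEq him)

lemma eval_derivative_eq_zero_of_nonneg_on_circle {P : ℂ[X]} {N : ℤ}
    (hP : ∀ z : ℂ, ‖z‖ = 1 → 0 ≤ P.eval z * z ^ N) {w : ℂ} (hw : ‖w‖ = 1)
    (hPw : P.eval w = 0) : P.derivative.eval w = 0 := by
  have hw0 : w ≠ 0 := by rintro rfl; simp at hw
  obtain ⟨θ₀, hθ₀⟩ : ∃ θ₀, circleMap 0 1 θ₀ = w :=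
    ⟨w.arg, by simpa [circleMap, hw] using Complex.norm_mul_exp_arg_mul_I w⟩
  have he : HasDerivAt (circleMap 0 1) (w * Complex.I) θ₀ := hθ₀ ▸ hasDerivAt_circleMap 0 1 θ₀
  have hderiv : HasDerivAt (fun θ => P.eval (circleMap 0 1 θ) * circleMap 0 1 θ ^ N)
      (P.derivative.eval w * (w * Complex.I) * w ^ N) θ₀ := by
    refine (((P.hasDerivAt w).comp_of_eq θ₀ he hθ₀.symm).mul
      ((hasDerivAt_zpow N w (Or.inl hw0)).comp_of_eq θ₀ he hθ₀.symm)).congr_deriv ?_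
    simp [hθ₀, hPw]
  have := hderiv.eq_zero_of_eventually_nonneg_of_eq_zero
    (Eventually.of_forall fun θ => hP _ (by simp)) (by simp [hθ₀, hPw])
  simpa [hw0, Complex.I_ne_zero, zpow_ne_zero] using this

lemma IsPrimitiveRoot.sum_pow_zpow {K : Type*} [Field K] {ζ : K} {m : ℕ}
    (hζ : IsPrimitiveRoot ζ m) (n : ℤ) :
    ∑ k ∈ range m, (ζ ^ k) ^ n = if (m : ℤ) ∣ n then (m : K) else 0 := by
  simp_rw [← zpow_natCast ζ, ← zpow_mul, mul_comm _ n, zpow_mul, zpow_natCast]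
  split_ifs with hdvd
  · simp [(hζ.zpow_eq_one_iff_dvd n).2 hdvd]
  · have hxm : (ζ ^ n) ^ m = 1 := by
      rw [← zpow_natCast, ← zpow_mul, mul_comm, zpow_mul, zpow_natCast, hζ.pow_eq_one, one_zpow]
    rw [geom_sum_eq (mt (hζ.zpow_eq_one_iff_dvd n).1 hdvd), hxm, sub_self, zero_div]

lemma sum_evalCircle_primitiveRoot_mul (f : LaurentPolynomial ℝ) {ζ : ℂ} {m : ℕ}
    (hζ : IsPrimitiveRoot ζ m) (w : ℂ) :
    ∑ k ∈ range m, evalCircle f (ζ ^ k * w) =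
      ∑ n ∈ (AddMonoidAlgebra.coeff f).support,
        (if (m : ℤ) ∣ n then (m : ℂ) else 0) * (coeffL f n * w ^ n) := by
  simp only [evalCircle, Finsupp.sum]
  rw [Finset.sum_comm]
  refine Finset.sum_congr rfl fun n _ => ?_
  rw [← hζ.sum_pow_zpow n, Finset.sum_mul]
  refine Finset.sum_congr rfl fun k _ => ?_
  rw [mul_zpow, coeffL]
  ring

lemma mem_of_dvd_of_coeffL_ne_zero {f : LaurentPolynomial ℝ} {m : ℕ}
    (hsymm : ∀ n, coeffL f (-n) = coeffL f n)
    (hvan : ∀ n : ℤ, (m : ℤ) < n → (m : ℤ) ∣ n → coeffL f n = 0) {n : ℤ} (hdvd : (m : ℤ) ∣ n)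
    (hn : coeffL f n ≠ 0) :
    n ∈ ({-(m : ℤ), 0, (m : ℤ)} : Finset ℤ) := by
  obtain ⟨q, rfl⟩ := hdvd
  by_contra hT
  simp only [Finset.mem_insert, Finset.mem_singleton, not_or] at hT
  obtain ⟨hneg, hzero, hpos⟩ := hT
  have hm : (0 : ℤ) < m := by
    have := left_ne_zero_of_mul hzero
    omega
  have hq : 2 ≤ q ∨ q ≤ -2 := by
    have : q ≠ 1 := by rintro rfl; exact hpos (mul_one _)
    have : q ≠ 0 := by rintro rfl; exact hzero (mul_zero _)
    have : q ≠ -1 := by rintro rfl; exact hneg (by ring)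
    omega
  rcases hq with hq | hq
  · exact hn (hvan _ (by nlinarith) (dvd_mul_right _ _))
  · rw [← hsymm] at hn
    exact hn (hvan _ (by nlinarith) (Dvd.dvd.neg_right (dvd_mul_right _ _)))

lemma sum_evalCircle_primitiveRoot_mul_of_symm {f : LaurentPolynomial ℝ} {m : ℕ}
    (hsymm : ∀ n, coeffL f (-n) = coeffL f n)
    (hvan : ∀ n : ℤ, (m : ℤ) < n → (m : ℤ) ∣ n → coeffL f n = 0) (hm : 1 ≤ m) {ζ : ℂ}
    (hζ : IsPrimitiveRoot ζ m) (w : ℂ) :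
    ∑ k ∈ range m, evalCircle f (ζ ^ k * w) =
      m * (coeffL f 0 + coeffL f m * (w ^ m + (w ^ m)⁻¹)) := by
  set φ : ℤ → ℂ := fun n => (if (m : ℤ) ∣ n then (m : ℂ) else 0) * (coeffL f n * w ^ n)
  have hsupp : Function.support φ ⊆ ↑({-(m : ℤ), 0, (m : ℤ)} : Finset ℤ) := by
    intro n hn
    simp only [Function.mem_support, φ, ne_eq, ite_mul, zero_mul, ite_eq_right_iff,
      not_forall, mul_eq_zero, not_or] at hn
    obtain ⟨hdvd, -, hcoeff, -⟩ := hn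
    exact mem_of_dvd_of_coeffL_ne_zero hsymm hvan hdvd (by exact_mod_cast hcoeff)
  have hsupp' : Function.support φ ⊆ ↑(AddMonoidAlgebra.coeff f).support := by
    intro n hn
    simp only [Function.mem_support, φ] at hn
    simp only [Finset.mem_coe, Finsupp.mem_support_iff]
    intro h
    exact hn (by simp [coeffL, h])
  rw [sum_evalCircle_primitiveRoot_mul f hζ w, ← finsum_eq_sum_of_support_subset φ hsupp',
    finsum_eq_sum_of_support_subset φ hsupp, Finset.sum_insert (by simp; omega),
    Finset.sum_insert (by simp; omega), Finset.sum_singleton]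
  simp only [φ, dvd_neg, dvd_refl, dvd_zero, if_true, hsymm, zpow_neg, zpow_natCast, zpow_zero]
  ring

lemma norm_eq_one_of_pow_eq_of_sq_eq_one {m : ℕ} (hm : m ≠ 0) {c : ℝ} (hc : c ^ 2 = 1) {w : ℂ}
    (hw : w ^ m = c) : ‖w‖ = 1 :=
  Complex.norm_eq_one_of_pow_eq_one (n := 2 * m) (by rw [pow_mul', hw]; exact_mod_cast hc)
    (by omega)

lemma evalCircle_eq_zero_of_pow_eq {f : LaurentPolynomial ℝ}
    (hpos : ∀ z : ℂ, ‖z‖ = 1 → 0 ≤ evalCircle f z) {m : ℕ} (hm : 1 ≤ m)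
    (hvan : ∀ n : ℤ, (m : ℤ) < n → (m : ℤ) ∣ n → coeffL f n = 0) {c : ℝ} (hc : c ^ 2 = 1)
    (hcoeff : coeffL f 0 + 2 * c * coeffL f m = 0) {w : ℂ} (hw : w ^ m = c) :
    evalCircle f w = 0 := by
  have hm0 : m ≠ 0 := by omega
  have hw1 := norm_eq_one_of_pow_eq_of_sq_eq_one hm0 hc hw
  obtain ⟨ζ, hζ⟩ : ∃ ζ : ℂ, IsPrimitiveRoot ζ m := ⟨_, Complex.isPrimitiveRoot_exp m hm0⟩
  have hnorm : ∀ k : ℕ, ‖ζ ^ k * w‖ = 1 := fun k => by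
    rw [norm_mul, norm_pow, Complex.norm_eq_one_of_pow_eq_one hζ.pow_eq_one hm0, hw1, one_pow,
      one_mul]
  have hsum : ∑ k ∈ range m, evalCircle f (ζ ^ k * w) = 0 := by
    rw [sum_evalCircle_primitiveRoot_mul_of_symm (coeffL_neg_of_nonneg hpos) hvan hm hζ, hw,
      inv_eq_of_mul_eq_one_right (by rw [← sq]; exact_mod_cast hc)]
    exact_mod_cast by linear_combination (m : ℝ) * hcoeff
  simpa using (Finset.sum_eq_zero_iff_of_nonneg fun k _ => hpos _ (hnorm k)).1 hsum 0
    (by simp; omega)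

lemma Polynomial.Separable.sq_dvd_of_dvd_of_dvd_derivative {R : Type*} [CommRing R]
    {q P : R[X]} (hq : q.Separable) (hP : q ∣ P) (hP' : q ∣ P.derivative) : q ^ 2 ∣ P := by
  obtain ⟨s, rfl⟩ := hP
  rw [Polynomial.derivative_mul, dvd_add_left (dvd_mul_right q _)] at hP'
  obtain ⟨t, rfl⟩ := hq.dvd_of_dvd_mul_left hP'
  exact ⟨t, by ring⟩

lemma Polynomial.Separable.dvd_of_forall_isRoot {K : Type*} [Field K] {q Q : K[X]}
    (hq : q.Separable) (hsplit : q.Splits) (h : ∀ r, q.IsRoot r → Q.IsRoot r) : q ∣ Q := by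
  rcases eq_or_ne Q 0 with rfl | hQ
  · exact dvd_zero q
  refine hsplit.dvd_of_roots_le_roots hq.ne_zero ((Multiset.le_iff_subset
    (Polynomial.nodup_roots hq)).2 fun r hr => ?_)
  rw [Polynomial.mem_roots hQ]
  exact h r (Polynomial.isRoot_of_mem_roots hr)

lemma toLaurent_sq_dvd_of_coeffL_add_eq_zero {f : LaurentPolynomial ℝ}
    (hpos : ∀ z : ℂ, ‖z‖ = 1 → 0 ≤ evalCircle f z) {m : ℕ} (hm : 1 ≤ m)
    (hvan : ∀ n : ℤ, (m : ℤ) < n → (m : ℤ) ∣ n → coeffL f n = 0) {c : ℝ} (hc : c ^ 2 = 1)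
    (hcoeff : coeffL f 0 + 2 * c * coeffL f m = 0) :
    ((Polynomial.X ^ m - Polynomial.C c) ^ 2).toLaurent ∣ f := by
  obtain ⟨N, p, hp⟩ := f.exists_T_pow
  have hf : f = p.toLaurent * T (-N) := by rw [hp, mul_T_assoc, add_neg_cancel, T_zero, mul_one]
  rw [hf]
  refine dvd_mul_of_dvd_left (map_dvd _ ?_) _
  rw [← Polynomial.map_dvd_map' Complex.ofRealHom]
  simp only [Polynomial.map_pow, Polynomial.map_sub, Polynomial.map_X, Polynomial.map_C]
  have hc0 : (c : ℂ) ≠ 0 := by rintro h; norm_num [Complex.ofReal_eq_zero.1 h] at hc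
  have hsep := Polynomial.separable_X_pow_sub_C (c : ℂ) (by exact_mod_cast (by omega : m ≠ 0)) hc0
  have hroot : ∀ w : ℂ, (Polynomial.X ^ m - Polynomial.C (c : ℂ)).IsRoot w →
      (p.map Complex.ofRealHom).IsRoot w ∧ (p.map Complex.ofRealHom).derivative.IsRoot w := by
    intro w hw
    rw [Polynomial.IsRoot, Polynomial.eval_sub, Polynomial.eval_pow, Polynomial.eval_X,
      Polynomial.eval_C, sub_eq_zero] at hw
    have hw1 := norm_eq_one_of_pow_eq_of_sq_eq_one (by omega) hc hw
    have hw0 : w ≠ 0 := by rintro rfl; simp at hw1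
    have hPw : (p.map Complex.ofRealHom).eval w = 0 := by
      rw [eval_map_ofReal_eq_evalCircle_mul_pow hp hw0,
        evalCircle_eq_zero_of_pow_eq hpos hm hvan hc hcoeff hw, zero_mul]
    refine ⟨hPw, eval_derivative_eq_zero_of_nonneg_on_circle (N := -N) (fun z hz => ?_) hw1 hPw⟩
    have hz0 : z ≠ 0 := by rintro rfl; simp at hz
    rw [eval_map_ofReal_eq_evalCircle_mul_pow hp hz0, zpow_neg, zpow_natCast,
      mul_inv_cancel_right₀ (pow_ne_zero _ hz0)]
    exact hpos z hz
  exact hsep.sq_dvd_of_dvd_of_dvd_derivative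
    (hsep.dvd_of_forall_isRoot (IsAlgClosed.splits _) fun w hw => (hroot w hw).1)
    (hsep.dvd_of_forall_isRoot (IsAlgClosed.splits _) fun w hw => (hroot w hw).2)

/-- Proposition 5.2 (ii) and (iii): if the Laurent polynomial `f = ∑ aₙ tⁿ` is positive
on the unit circle and `aₙ = 0` for every `n > m` divisible by `m`, then: if
`aₘ = a₀/2` then `t⁻ᵐ + 2 + tᵐ` divides `f` in `ℝ[t, t⁻¹]`, and if `aₘ = -a₀/2` then
`-t⁻ᵐ + 2 - tᵐ` divides `f` in `ℝ[t, t⁻¹]`. -/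
theorem stmt_9 (f : LaurentPolynomial ℝ)
    (hpos : ∀ z : ℂ, ‖z‖ = 1 → 0 ≤ evalCircle f z)
    (m : ℕ) (hm : 1 ≤ m)
    (hvan : ∀ n : ℤ, (m : ℤ) < n → (m : ℤ) ∣ n → coeffL f n = 0) :
    (coeffL f m = coeffL f 0 / 2 →
      (T (-(m : ℤ)) + 2 + T (m : ℤ)) ∣ f) ∧
    (coeffL f m = -(coeffL f 0) / 2 →
      (-T (-(m : ℤ)) + 2 - T (m : ℤ)) ∣ f) := by
  have hTT : T (-(m : ℤ)) * T (m : ℤ) = (1 : LaurentPolynomial ℝ) := by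
    rw [← T_add, neg_add_cancel, T_zero]
  constructor
  · intro hcoeff
    have hfactor : T (-(m : ℤ)) + 2 + T (m : ℤ) =
        T (-(m : ℤ)) * ((Polynomial.X ^ m - Polynomial.C (-1 : ℝ)) ^ 2).toLaurent := by
      rw [map_pow, map_sub, Polynomial.toLaurent_X_pow, Polynomial.toLaurent_C, map_neg, map_one]
      linear_combination (-(T (m : ℤ)) - 2) * hTT
    rw [hfactor, (isUnit_T _).mul_left_dvd]
    exact toLaurent_sq_dvd_of_coeffL_add_eq_zero hpos hm hvan (by norm_num)
      (by rw [hcoeff]; ring)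
  · intro hcoeff
    have hfactor : -T (-(m : ℤ)) + 2 - T (m : ℤ) =
        -T (-(m : ℤ)) * ((Polynomial.X ^ m - Polynomial.C (1 : ℝ)) ^ 2).toLaurent := by
      rw [map_pow, map_sub, Polynomial.toLaurent_X_pow, Polynomial.toLaurent_C, map_one]
      linear_combination (T (m : ℤ) - 2) * hTT
    rw [hfactor, (isUnit_T (R := ℝ) _).neg.mul_left_dvd]
    exact toLaurent_sq_dvd_of_coeffL_add_eq_zero hpos hm hvan (by norm_num)
      (by rw [hcoeff]; ring)
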